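/- arXiv:math/0403235 — 2 statements merged into one kernel-verified Lean document; each statement's English description precedes it below -/
import Mathlib

section
/- Let X be a real normed space (mass norm M), Y ⊆ X a subspace (closed currents), q : Y → V a surjective linear map onto a finite-dimensional space V (homology), and N : V → ℝ the quotient-type norm satisfying N(q(T)) ≤ M(T) for all T ∈ Y. If l : V → ℝ is a subderivative of N at α ∈ V, then there exists a linear functional L : X → ℝ with ‖L‖ ≤ 1 such that L(T) = l(q(T)) for all T ∈ Y. Moreover, if T ∈ Y satisfies q(T) = α and M(T) = N(α), then L(T) = M(T). -/
/- STATEMENT 6 (Lemma 3.4, abstract): a subderivative `l` of the quotient norm `N`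
at `α` extends to a calibration `L` (norm ≤ 1) with `L = l ∘ q` on closed currents;
`L` calibrates every minimizer in the class `α`. -/
theorem stmt6 {X V : Type*} [NormedAddCommGroup X] [NormedSpace ℝ X]
    [AddCommGroup V] [Module ℝ V] [FiniteDimensional ℝ V]
    (N : V → ℝ) (Y : Submodule ℝ X) (q : Y →ₗ[ℝ] V)
    (hq : Function.Surjective q)
    (hN : ∀ T : Y, N (q T) ≤ ‖(T : X)‖)
    (α : V) (l : V →ₗ[ℝ] ℝ)
    (hlα : l α = N α) (hl : ∀ β, l β ≤ N β) :
    ∃ L : X →ₗ[ℝ] ℝ, (∀ x, |L x| ≤ ‖x‖) ∧ (∀ T : Y, L (T : X) = l (q T)) ∧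
      ∀ T : Y, q T = α → ‖(T : X)‖ = N α → L (T : X) = ‖(T : X)‖ := by
  -- f = l ∘ q on Y, bounded by the norm
  have hbound : ∀ T : Y, |l (q T)| ≤ ‖(T : X)‖ := by
    intro T
    rw [abs_le]
    constructor
    · have := (hl (q (-T))).trans (hN (-T))
      simp only [map_neg] at this
      rw [show ((-T : Y) : X) = -(T : X) from rfl, norm_neg] at this
      linarith
    · exact (hl (q T)).trans (hN T)
  set f : Y →L[ℝ] ℝ := LinearMap.mkContinuous (l.comp q) 1 (by
    intro T
    simpa using hbound T)
  obtain ⟨g, hg, hgn⟩ := exists_extension_norm_eq Y f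
  have hfn : ‖f‖ ≤ 1 := LinearMap.mkContinuous_norm_le _ zero_le_one _
  refine ⟨g.toLinearMap, ?_, ?_, ?_⟩
  · intro x
    calc |g x| ≤ ‖g‖ * ‖x‖ := g.le_opNorm x
    _ ≤ 1 * ‖x‖ := by
        apply mul_le_mul_of_nonneg_right _ (norm_nonneg x)
        rw [hgn]; exact hfn
    _ = ‖x‖ := one_mul _
  · intro T
    exact hg T
  · intro T hqT hM
    have : g (T : X) = l (q T) := hg T
    rw [ContinuousLinearMap.coe_coe, this, hqT, hlα, hM]
end

section
/- Let X be a finite-dimensional real vector space with norm N, and suppose l₁, l₂ are subderivatives of N at α ∈ X. If N restricted to a subspace V ∋ α is differentiable at α, then l₁ and l₂ agree on V. Conversely, if every pair of subderivatives of N at α agree on V, and α ∈ V, then the restriction N|V is differentiable at α. -/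
/-!
A subgradient `l` of `N|V` at `α` makes `t ↦ N (α + t • β) - t * l β` minimal at `t = 0`, so `l β`
is the derivative of `N|V` at `α` in the direction `β`.

Conversely, for a convex `f` the one-sided directional derivative `f'(a; ·)`
(`rightLineDeriv f a`) is sublinear, every linear functional below it is a subgradient, and by
Hahn–Banach it is attained at any given direction by such a functional. A unique subgradient therefore makes `f'(a; ·)` linear, i.e. `f`
is Gateaux differentiable at `a`; in finite dimensions Jensen's inequality along a basis upgrades
this to Fréchet differentiability. Subgradients of `N|V` extend to subgradients of `N`, again by
Hahn–Banach, so two of them are restrictions of subderivatives of `N`, which agree on `V`.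
-/

open Filter Set Asymptotics
open scoped Topology

section Subdifferential

variable {E : Type*} [AddCommGroup E] [Module ℝ E]

def subdifferential (f : E → ℝ) (a : E) : Set (E →ₗ[ℝ] ℝ) :=
  {l | ∀ x, f a + l (x - a) ≤ f x}

theorem comp_mem_subdifferential {F : Type*} [AddCommGroup F] [Module ℝ F] (φ : F →ₗ[ℝ] E)
    {f : E → ℝ} {a : F} {l : E →ₗ[ℝ] ℝ} (hl : l ∈ subdifferential f (φ a)) :
    l.comp φ ∈ subdifferential (f ∘ φ) a := fun x => by
  simpa using hl (φ x)

theorem Seminorm.mem_subdifferential_iff (p : Seminorm ℝ E) {a : E} {l : E →ₗ[ℝ] ℝ} :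
    l ∈ subdifferential p a ↔ l a = p a ∧ ∀ x, l x ≤ p x := by
  constructor
  · intro hl
    have hla : l a = p a := by
      have h₀ := hl 0
      have h₂ := hl ((2 : ℝ) • a)
      rw [zero_sub, map_neg, map_zero] at h₀
      rw [show (2 : ℝ) • a - a = a by module, map_smul_eq_mul, Real.norm_two] at h₂
      linarith
    refine ⟨hla, fun x => ?_⟩
    have := hl x
    rw [map_sub, hla] at this
    linarith
  · rintro ⟨hla, hle⟩ x
    rw [map_sub, hla]
    linarith [hle x]

theorem Seminorm.exists_extension_mem_subdifferential
    (p : Seminorm ℝ E) (V : Submodule ℝ E) {a : V} {l : V →ₗ[ℝ] ℝ}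
    (hl : l ∈ subdifferential (p.comp V.subtype) a) :
    ∃ L ∈ subdifferential p a, ∀ x : V, L x = l x := by
  rw [Seminorm.mem_subdifferential_iff] at hl
  obtain ⟨L, hLl, hLp⟩ := Module.Dual.exists_extension_of_le_seminorm_real V l hl.2
  refine ⟨L, p.mem_subdifferential_iff.2 ⟨?_, fun x => (le_abs_self _).trans (hLp x)⟩, hLl⟩
  rw [hLl, hl.1]
  rfl

theorem exists_linearMap_le_sublinear_eq (p : E → ℝ)
    (p_hom : ∀ c : ℝ, 0 < c → ∀ x, p (c • x) = c * p x)
    (p_add : ∀ x y, p (x + y) ≤ p x + p y) (w : E) :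
    ∃ l : E →ₗ[ℝ] ℝ, (∀ x, l x ≤ p x) ∧ l w = p w := by
  have p_zero : p 0 = 0 := by
    have := p_hom 2 two_pos 0
    rw [smul_zero] at this
    linarith
  have hw : ∀ c : ℝ, c • w = 0 → RingHom.id ℝ c • p w = 0 := by
    intro c hc
    rcases eq_or_ne c 0 with rfl | hc0
    · simp
    · rw [RingHom.id_apply, (smul_eq_zero.1 hc).resolve_left hc0, p_zero, smul_zero]
  have hdom : ∀ x : (LinearPMap.mkSpanSingleton' w (p w) hw).domain,
      LinearPMap.mkSpanSingleton' w (p w) hw x ≤ p x := by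
    rintro ⟨x, hx⟩
    obtain ⟨c, rfl⟩ := Submodule.mem_span_singleton.1 hx
    rw [LinearPMap.mkSpanSingleton'_apply, RingHom.id_apply, smul_eq_mul]
    rcases lt_trichotomy c 0 with hc | rfl | hc
    · have h₁ := p_add w (-w)
      rw [add_neg_cancel, p_zero] at h₁
      have h₂ : p (c • w) = -c * p (-w) := by
        rw [← p_hom _ (neg_pos.2 hc), neg_smul, smul_neg, neg_neg]
      nlinarith
    · simp [p_zero]
    · rw [p_hom c hc]
  obtain ⟨l, hl, hlp⟩ := exists_extension_of_le_sublinear _ p p_hom p_add hdom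
  exact ⟨l, hlp, (hl ⟨w, Submodule.mem_span_singleton_self w⟩).trans
    (LinearPMap.mkSpanSingleton'_apply_self _ _ _ _)⟩

end Subdifferential

section RightLineDeriv

variable {E : Type*} [AddCommGroup E] [Module ℝ E] {f : E → ℝ}

noncomputable def rightLineDeriv (f : E → ℝ) (a v : E) : ℝ :=
  derivWithin (fun t : ℝ => f (a + t • v)) (Ioi 0) 0

namespace ConvexOn

theorem comp_line (hf : ConvexOn ℝ univ f) (a v : E) :
    ConvexOn ℝ univ fun t : ℝ => f (a + t • v) := by
  refine ⟨convex_univ, fun x _ y _ s t hs ht hst => ?_⟩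
  convert hf.2 (mem_univ (a + x • v)) (mem_univ (a + y • v)) hs ht hst using 2
  calc a + (s • x + t • y) • v = (s + t) • a + (s • x + t • y) • v := by rw [hst, one_smul]
    _ = _ := by module

theorem hasDerivWithinAt_rightLineDeriv (hf : ConvexOn ℝ univ f) (a v : E) :
    HasDerivWithinAt (fun t : ℝ => f (a + t • v)) (rightLineDeriv f a v) (Ioi 0) 0 :=
  (hf.comp_line a v).hasDerivWithinAt_rightDeriv_of_mem_interior (by simp)

theorem rightLineDeriv_le_sub (hf : ConvexOn ℝ univ f) (a v : E) :
    rightLineDeriv f a v ≤ f (a + v) - f a := by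
  simpa [slope_def_field] using (hf.comp_line a v).le_slope_of_hasDerivWithinAt_Ioi
    (mem_univ 0) (mem_univ 1) one_pos (hf.hasDerivWithinAt_rightLineDeriv a v)

theorem rightLineDeriv_smul (hf : ConvexOn ℝ univ f) (a v : E) {c : ℝ} (hc : 0 < c) :
    rightLineDeriv f a (c • v) = c * rightLineDeriv f a v := by
  have h : HasDerivWithinAt (fun t : ℝ => f (a + (c * t) • v)) (rightLineDeriv f a v * c)
      (Ioi 0) 0 := by
    have := (hf.hasDerivWithinAt_rightLineDeriv a v).comp_of_eq (x := 0)
      (((hasDerivAt_id 0).const_mul c).hasDerivWithinAt (s := Ioi 0))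
      (fun t (ht : 0 < t) => show 0 < c * t by positivity) (mul_zero c).symm
    simpa only [Function.comp_def, id, mul_one] using this
  show derivWithin (fun t : ℝ => f (a + t • c • v)) (Ioi 0) 0 = _
  simp_rw [smul_smul, mul_comm _ c]
  rw [h.derivWithin (uniqueDiffWithinAt_Ioi 0), mul_comm]

theorem rightLineDeriv_add_le (hf : ConvexOn ℝ univ f) (a v w : E) :
    rightLineDeriv f a (v + w) ≤ rightLineDeriv f a v + rightLineDeriv f a w := by
  have slope_tendsto := fun u => (hasDerivWithinAt_iff_tendsto_slope' self_notMem_Ioi).1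
    (hf.hasDerivWithinAt_rightLineDeriv a u)
  have key : rightLineDeriv f a (v + w) ≤
      2⁻¹ * rightLineDeriv f a ((2 : ℝ) • v) + 2⁻¹ * rightLineDeriv f a ((2 : ℝ) • w) := by
    refine le_of_tendsto_of_tendsto (slope_tendsto (v + w))
      (((slope_tendsto _).const_mul _).add ((slope_tendsto _).const_mul _)) ?_
    filter_upwards [self_mem_nhdsWithin] with t (ht : 0 < t)
    have hconv := hf.2 (mem_univ (a + t • (2 : ℝ) • v)) (mem_univ (a + t • (2 : ℝ) • w))
      (inv_nonneg.2 zero_le_two) (inv_nonneg.2 zero_le_two) (by norm_num)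
    rw [show (2⁻¹ : ℝ) • (a + t • (2 : ℝ) • v) + (2⁻¹ : ℝ) • (a + t • (2 : ℝ) • w)
      = a + t • (v + w) by module] at hconv
    simp only [slope_def_field, zero_smul, add_zero, sub_zero, smul_eq_mul] at hconv ⊢
    rw [div_le_iff₀ ht]
    field_simp
    linarith
  rwa [hf.rightLineDeriv_smul a v two_pos, hf.rightLineDeriv_smul a w two_pos,
    inv_mul_cancel_left₀ two_ne_zero, inv_mul_cancel_left₀ two_ne_zero] at key

theorem mem_subdifferential_of_le_rightLineDeriv (hf : ConvexOn ℝ univ f) {a : E}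
    {l : E →ₗ[ℝ] ℝ} (hl : ∀ v, l v ≤ rightLineDeriv f a v) : l ∈ subdifferential f a := by
  intro x
  have := (hl (x - a)).trans (hf.rightLineDeriv_le_sub a (x - a))
  rw [add_sub_cancel] at this
  linarith

theorem exists_linearMap_eq_rightLineDeriv (hf : ConvexOn ℝ univ f) {a : E}
    (h : (subdifferential f a).Subsingleton) :
    ∃ L : E →ₗ[ℝ] ℝ, ∀ v, rightLineDeriv f a v = L v := by
  have hom := fun c (hc : 0 < c) v => hf.rightLineDeriv_smul a v hc
  obtain ⟨L, hL, -⟩ := exists_linearMap_le_sublinear_eq _ hom (hf.rightLineDeriv_add_le a) 0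
  refine ⟨L, fun v => ?_⟩
  obtain ⟨l, hl, hlv⟩ := exists_linearMap_le_sublinear_eq _ hom (hf.rightLineDeriv_add_le a) v
  rw [← hlv, h (hf.mem_subdifferential_of_le_rightLineDeriv hl)
    (hf.mem_subdifferential_of_le_rightLineDeriv hL)]

end ConvexOn

end RightLineDeriv

section Differentiability

variable {E : Type*} [NormedAddCommGroup E] [NormedSpace ℝ E] {f : E → ℝ} {a : E}

theorem DifferentiableAt.apply_eq_fderiv_of_mem_subdifferential (hf : DifferentiableAt ℝ f a)
    {l : E →ₗ[ℝ] ℝ} (hl : l ∈ subdifferential f a) (v : E) : l v = fderiv ℝ f a v := by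
  have hderiv : HasDerivAt (fun t : ℝ => f (a + t • v) - t * l v) (fderiv ℝ f a v - l v) 0 := by
    have hline := (hf.hasFDerivAt.comp_hasDerivAt_of_eq (0 : ℝ)
      (((hasDerivAt_id 0).smul_const v).const_add a) (by simp))
    simpa [Function.comp_def] using hline.fun_sub ((hasDerivAt_id 0).mul_const (l v))
  have hmin : IsLocalMin (fun t : ℝ => f (a + t • v) - t * l v) 0 :=
    Eventually.of_forall fun t => by
      have := hl (a + t • v)
      simp only [add_sub_cancel_left, map_smul, smul_eq_mul] at this
      simp only [zero_smul, add_zero, zero_mul, sub_zero]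
      linarith
  linarith [hmin.hasDerivAt_eq_zero hderiv]

theorem hasDerivAt_line_of_hasDerivWithinAt_Ioi {L : E →ₗ[ℝ] ℝ}
    (h : ∀ v, HasDerivWithinAt (fun t : ℝ => f (a + t • v)) (L v) (Ioi 0) 0) (v : E) :
    HasDerivAt (fun t : ℝ => f (a + t • v)) (L v) 0 := by
  have hleft : HasDerivWithinAt (fun t : ℝ => f (a + t • v)) (L v) (Iio 0) 0 := by
    have := (h (-v)).comp_of_eq (x := 0) ((hasDerivAt_neg (0 : ℝ)).hasDerivWithinAt (s := Iio 0))
      (fun t (ht : t < 0) => mem_Ioi.2 (neg_pos.2 ht)) (by simp)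
    simpa [Function.comp_def] using this
  rw [← hasDerivWithinAt_univ, ← Iic_union_Ici]
  exact hleft.Iic_of_Iio.union (h v).Ici_of_Ioi

theorem ConvexOn.isLittleO_id_of_isLittleO_line [FiniteDimensional ℝ E] {g : E → ℝ}
    (hg : ConvexOn ℝ univ g) (hg0 : g 0 = 0) (hg_nonneg : ∀ x, 0 ≤ g x)
    (hline : ∀ v, (fun t : ℝ => g (t • v)) =o[𝓝 0] fun t => t) :
    g =o[𝓝 0] fun x => x := by
  rcases subsingleton_or_nontrivial E with hE | hE
  · have : g = fun _ => 0 := funext fun x => by rw [Subsingleton.elim x 0, hg0]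
    rw [this]
    exact isLittleO_zero _ _
  set n := Module.finrank ℝ E
  have hn : (1 : ℝ) ≤ n := Nat.one_le_cast.2 Module.finrank_pos
  let b := Module.finBasis ℝ E
  let C : Fin n → E →L[ℝ] ℝ := fun i => LinearMap.toContinuousLinearMap ((n : ℝ) • b.coord i)
  have hbound : ∀ x, g x ≤ ∑ i, g (C i x • b i) := by
    intro x
    have hx : ∑ i, (n : ℝ)⁻¹ • (C i x • b i) = x := by
      conv_rhs => rw [← b.sum_repr x]
      refine Finset.sum_congr rfl fun i _ => ?_
      simp [C, smul_smul, (zero_lt_one.trans_le hn).ne']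
    calc g x = g (∑ i, (n : ℝ)⁻¹ • (C i x • b i)) := by rw [hx]
      _ ≤ ∑ i, (n : ℝ)⁻¹ • g (C i x • b i) :=
        hg.map_sum_le (fun _ _ => by positivity) (by simp [(zero_lt_one.trans_le hn).ne'])
          (fun _ _ => mem_univ _)
      _ ≤ ∑ i, g (C i x • b i) := Finset.sum_le_sum fun i _ =>
        mul_le_of_le_one_left (hg_nonneg _) (inv_le_one_of_one_le₀ hn)
  have hterm : ∀ i, (fun x => g (C i x • b i)) =o[𝓝 0] fun x => x := fun i =>
    ((hline (b i)).comp_tendsto ((C i).continuous.tendsto' 0 0 (map_zero _))).trans_isBigO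
      ((C i).isBigO_id _)
  refine IsBigO.trans_isLittleO (IsBigO.of_bound 1 (Eventually.of_forall fun x => ?_))
    (IsLittleO.fun_sum (s := Finset.univ) fun i _ => hterm i)
  rw [one_mul, Real.norm_of_nonneg (hg_nonneg x),
    Real.norm_of_nonneg (Finset.sum_nonneg fun i _ => hg_nonneg _)]
  exact hbound x

theorem ConvexOn.hasFDerivAt_of_hasDerivAt_line [FiniteDimensional ℝ E] (hf : ConvexOn ℝ univ f)
    {L : E →L[ℝ] ℝ} (h : ∀ v, HasDerivAt (fun t : ℝ => f (a + t • v)) (L v) 0) :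
    HasFDerivAt f L a := by
  rw [hasFDerivAt_iff_isLittleO_nhds_zero]
  refine ConvexOn.isLittleO_id_of_isLittleO_line ?_ (by simp) (fun x => ?_) (fun v => ?_)
  · exact ((hf.translate_right a).add_const (-f a)).sub (L.toLinearMap.concaveOn convex_univ)
  · have := (hf.comp_line a x).le_slope_of_hasDerivAt (mem_univ 0) (mem_univ 1) one_pos (h x)
    simp only [slope_def_field, one_smul, zero_smul, add_zero, sub_zero, div_one] at this
    linarith
  · simpa using hasDerivAt_iff_isLittleO_nhds_zero.1 (h v)

theorem ConvexOn.differentiableAt_of_subsingleton_subdifferential [FiniteDimensional ℝ E]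
    (hf : ConvexOn ℝ univ f) (h : (subdifferential f a).Subsingleton) :
    DifferentiableAt ℝ f a := by
  obtain ⟨L, hL⟩ := hf.exists_linearMap_eq_rightLineDeriv h
  have hright (v : E) : HasDerivWithinAt (fun t : ℝ => f (a + t • v)) (L v) (Ioi 0) 0 :=
    hL v ▸ hf.hasDerivWithinAt_rightLineDeriv a v
  exact (hf.hasFDerivAt_of_hasDerivAt_line (L := LinearMap.toContinuousLinearMap L)
    (hasDerivAt_line_of_hasDerivWithinAt_Ioi hright)).differentiableAt

end Differentiability

theorem stmt16_general {X : Type*} [NormedAddCommGroup X] [NormedSpace ℝ X]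
    [FiniteDimensional ℝ X]
    (N : X → ℝ)
    (hNadd : ∀ x y, N (x + y) ≤ N x + N y)
    (hNsmul : ∀ (c : ℝ) x, N (c • x) = |c| * N x)
    (V : Submodule ℝ X) (α : X) (hα : α ∈ V) :
    DifferentiableAt ℝ (fun v : V => N (v : X)) (⟨α, hα⟩ : V) ↔
      ∀ l₁ l₂ : X →ₗ[ℝ] ℝ,
        (l₁ α = N α ∧ ∀ x, l₁ x ≤ N x) →
        (l₂ α = N α ∧ ∀ x, l₂ x ≤ N x) →
        ∀ β ∈ V, l₁ β = l₂ β := by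
  let p : Seminorm ℝ X := Seminorm.of N hNadd fun c x => by rw [hNsmul, Real.norm_eq_abs]
  let q : Seminorm ℝ V := p.comp V.subtype
  change DifferentiableAt ℝ q _ ↔ ∀ l₁ l₂ : X →ₗ[ℝ] ℝ, (l₁ α = p α ∧ ∀ x, l₁ x ≤ p x) →
    (l₂ α = p α ∧ ∀ x, l₂ x ≤ p x) → ∀ β ∈ V, l₁ β = l₂ β
  simp only [← p.mem_subdifferential_iff]
  constructor
  · intro hdiff l₁ l₂ h₁ h₂ β hβ
    have key (l : X →ₗ[ℝ] ℝ) (hl : l ∈ subdifferential p α) :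
        l β = fderiv ℝ q ⟨α, hα⟩ ⟨β, hβ⟩ :=
      hdiff.apply_eq_fderiv_of_mem_subdifferential (comp_mem_subdifferential V.subtype hl) ⟨β, hβ⟩
    rw [key l₁ h₁, key l₂ h₂]
  · intro H
    refine q.convexOn.differentiableAt_of_subsingleton_subdifferential fun l₁ hl₁ l₂ hl₂ => ?_
    obtain ⟨L₁, hL₁, hL₁l⟩ := p.exists_extension_mem_subdifferential V hl₁
    obtain ⟨L₂, hL₂, hL₂l⟩ := p.exists_extension_mem_subdifferential V hl₂
    ext x
    rw [← hL₁l, ← hL₂l]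
    exact H L₁ L₂ hL₁ hL₂ x x.2

theorem stmt16 {X : Type*} [NormedAddCommGroup X] [NormedSpace ℝ X]
    [FiniteDimensional ℝ X]
    (N : X → ℝ)
    (hNadd : ∀ x y, N (x + y) ≤ N x + N y)
    (hNsmul : ∀ (c : ℝ) x, N (c • x) = |c| * N x)
    (hNpos : ∀ x, x ≠ 0 → 0 < N x)
    (V : Submodule ℝ X) (α : X) (hα : α ∈ V) :
    DifferentiableAt ℝ (fun v : V => N (v : X)) (⟨α, hα⟩ : V) ↔
      ∀ l₁ l₂ : X →ₗ[ℝ] ℝ,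
        (l₁ α = N α ∧ ∀ x, l₁ x ≤ N x) →
        (l₂ α = N α ∧ ∀ x, l₂ x ≤ N x) →
        ∀ β ∈ V, l₁ β = l₂ β :=
  stmt16_general N hNadd hNsmul V α hα
end
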